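/- arXiv:1912.02602 — 5 statements merged into one kernel-verified Lean document; each statement's English description precedes it below -/
import Mathlib

section
/- Let X be a compact metric space and Y a closed subset such that X \ Y is a countable union of pairwise disjoint nonempty clopen (in X) subsets Y_n with diam(Y_n) → 0. Then Y is a countable intersection of clopen subsets of X. In particular Y is a peak set for any closed subalgebra of C(X) containing all characteristic functions of clopen sets: there exists a continuous function h : X → ℂ with h = 1 on Y and |h(x)| < 1 for all x ∈ X \ Y, where h is a uniform limit of finite sums of scalar multiples of characteristic functions of clopen sets. -/
/-!
The complement of `Y` is the union of the `Yₙ`, so `Y = ⋂ n, Yₙᶜ`. For the peak function take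
`h = 1 - aₙ` on `Yₙ` and `h = 1` on `Y`, with `aₙ = 1/(n+1) → 0`. The finite combinations
`1 - ∑_{n<N} aₙ 1_{Yₙ}` of clopen indicators differ from `h` by at most `sup_{n ≥ N} |aₙ|`,
so they converge to `h` uniformly, and `h` is continuous as a uniform limit of continuous
functions.
-/

open Set Metric Filter Topology

namespace ClopenPartition

open Function

variable {X E : Type*} [NormedAddCommGroup E] {Yn : ℕ → Set X}

noncomputable def stepFun (Yn : ℕ → Set X) (a : ℕ → E) (x : X) : E :=
  ∑' m, (Yn m).indicator (fun _ => a m) x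

lemma indicator_const_eq_ite (hdisj : Pairwise (Disjoint on Yn)) {k : ℕ} {x : X}
    (hx : x ∈ Yn k) (a : ℕ → E) (m : ℕ) :
    (Yn m).indicator (fun _ => a m) x = if m = k then a k else 0 := by
  split_ifs with hmk
  · subst hmk
    exact indicator_of_mem hx _
  · exact indicator_of_notMem ((hdisj hmk).notMem_of_mem_right hx) _

lemma stepFun_of_mem (hdisj : Pairwise (Disjoint on Yn)) {k : ℕ} {x : X} (hx : x ∈ Yn k)
    (a : ℕ → E) : stepFun Yn a x = a k := by
  simp only [stepFun, indicator_const_eq_ite hdisj hx]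
  exact tsum_ite_eq k (fun _ => a k)

lemma stepFun_of_forall_notMem {x : X} (hx : ∀ m, x ∉ Yn m) (a : ℕ → E) :
    stepFun Yn a x = 0 := by
  simp [stepFun, hx]

lemma sum_range_indicator_of_mem (hdisj : Pairwise (Disjoint on Yn)) {k : ℕ} {x : X}
    (hx : x ∈ Yn k) (a : ℕ → E) (N : ℕ) :
    ∑ m ∈ Finset.range N, (Yn m).indicator (fun _ => a m) x = if k < N then a k else 0 := by
  simp only [indicator_const_eq_ite hdisj hx, Finset.sum_ite_eq', Finset.mem_range]

lemma tendstoUniformly_sum_range_indicator (hdisj : Pairwise (Disjoint on Yn)) {a : ℕ → E}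
    (ha : Tendsto a atTop (𝓝 0)) :
    TendstoUniformly (fun N x => ∑ m ∈ Finset.range N, (Yn m).indicator (fun _ => a m) x)
      (stepFun Yn a) atTop := by
  rw [Metric.tendstoUniformly_iff]
  intro ε hε
  obtain ⟨N₀, hN₀⟩ := Metric.tendsto_atTop.1 ha ε hε
  filter_upwards [eventually_ge_atTop N₀] with N hN x
  by_cases hx : ∃ k, x ∈ Yn k
  · obtain ⟨k, hk⟩ := hx
    rw [stepFun_of_mem hdisj hk, sum_range_indicator_of_mem hdisj hk]
    split_ifs with hkN
    · simpa using hε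
    · simpa [dist_comm] using hN₀ k (by omega)
  · push Not at hx
    simp [stepFun_of_forall_notMem hx, hx, hε]

lemma continuous_stepFun [TopologicalSpace X] (hclopen : ∀ m, IsClopen (Yn m))
    (hdisj : Pairwise (Disjoint on Yn)) {a : ℕ → E} (ha : Tendsto a atTop (𝓝 0)) :
    Continuous (stepFun Yn a) :=
  (tendstoUniformly_sum_range_indicator hdisj ha).continuous <| Frequently.of_forall fun _ =>
    continuous_finsetSum _ fun m _ => (hclopen m).continuous_indicator continuous_const

lemma exists_fin_sum_indicator_eq_one_sub [TopologicalSpace X] {R : Type*} [Ring R]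
    (hclopen : ∀ m, IsClopen (Yn m)) (a : ℕ → R) (N : ℕ) :
    ∃ (c : Fin (N + 1) → R) (S : Fin (N + 1) → Set X), (∀ i, IsClopen (S i)) ∧
      ∀ x, ∑ i, c i * (S i).indicator 1 x =
        1 - ∑ m ∈ Finset.range N, (Yn m).indicator (fun _ => a m) x := by
  refine ⟨Fin.cons 1 fun j => -a j, Fin.cons univ fun j => Yn j,
    Fin.cases isClopen_univ fun j => hclopen j, fun x => ?_⟩
  simp only [Fin.sum_univ_succ, Fin.cons_zero, Fin.cons_succ, indicator_univ, Pi.one_apply,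
    one_mul, neg_mul, Finset.sum_neg_distrib, ← sub_eq_add_neg]
  congr 1
  rw [← Fin.sum_univ_eq_sum_range (fun m => (Yn m).indicator (fun _ => a m) x)]
  simp only [← smul_eq_mul, smul_indicator_one_apply]

end ClopenPartition

lemma norm_one_sub_one_div_natCast_add_one_lt (k : ℕ) : ‖1 - 1 / ((k : ℂ) + 1)‖ < 1 := by
  have : (1 : ℂ) - 1 / ((k : ℂ) + 1) = ((k / (k + 1) : ℝ) : ℂ) := by
    push_cast
    field_simp
    ring
  rw [this, Complex.norm_real, Real.norm_of_nonneg (by positivity), div_lt_one (by positivity)]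
  linarith

open ClopenPartition in
theorem stmt4_general {X : Type*} [MetricSpace X]
    (Y : Set X)
    (Yn : ℕ → Set X) (hclopen : ∀ m, IsClopen (Yn m))
    (hdisj : Pairwise (Function.onFun Disjoint Yn)) (hunion : (⋃ m, Yn m) = Yᶜ) :
    (∃ C : ℕ → Set X, (∀ m, IsClopen (C m)) ∧ Y = ⋂ m, C m) ∧
      ∃ h : X → ℂ, Continuous h ∧ (∀ y ∈ Y, h y = 1) ∧
        (∀ x ∉ Y, ‖h x‖ < 1) ∧
        ∀ ε > 0, ∃ (m : ℕ) (c : Fin m → ℂ) (E : Fin m → Set X),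
          (∀ i, IsClopen (E i)) ∧
          ∀ x, ‖h x - ∑ i, c i * (E i).indicator 1 x‖ ≤ ε := by
  set a : ℕ → ℂ := fun m => 1 / ((m : ℂ) + 1)
  have ha : Tendsto a atTop (𝓝 0) := tendsto_one_div_add_atTop_nhds_zero_nat
  have hY : ∀ x, x ∈ Y ↔ ∀ m, x ∉ Yn m := fun x => by
    rw [← compl_compl Y, ← hunion]
    simp
  refine ⟨⟨fun m => (Yn m)ᶜ, fun m => (hclopen m).compl,
      by rw [← compl_iUnion, hunion, compl_compl]⟩,
    fun x => 1 - stepFun Yn a x, continuous_const.sub (continuous_stepFun hclopen hdisj ha),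
    fun y hy => by simp [stepFun_of_forall_notMem ((hY y).1 hy)],
    fun x hx => ?_, fun ε hε => ?_⟩
  · obtain ⟨k, hk⟩ : ∃ k, x ∈ Yn k := by simpa [hY] using hx
    show ‖1 - stepFun Yn a x‖ < 1
    rw [stepFun_of_mem hdisj hk]
    exact norm_one_sub_one_div_natCast_add_one_lt k
  · obtain ⟨N, hN⟩ := (Metric.tendstoUniformly_iff.1
      (tendstoUniformly_sum_range_indicator hdisj ha) ε hε).exists
    obtain ⟨c, S, hS, hcS⟩ := exists_fin_sum_indicator_eq_one_sub hclopen a N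
    refine ⟨N + 1, c, S, hS, fun x => ?_⟩
    rw [hcS, sub_sub_sub_cancel_left, ← dist_eq_norm, dist_comm]
    exact (hN x).le

/-- In a compact metric space, a closed set `Y` whose complement is a disjoint union of
nonempty clopen sets of diameter tending to `0` is a countable intersection of clopen
sets; in particular it is a peak set, peaked by a uniform limit of finite linear
combinations of characteristic functions of clopen sets. -/
theorem stmt4 {X : Type*} [MetricSpace X] [CompactSpace X]
    (Y : Set X) (hYcl : IsClosed Y) (hYne : Y.Nonempty)
    (Yn : ℕ → Set X) (hclopen : ∀ m, IsClopen (Yn m)) (hne : ∀ m, (Yn m).Nonempty)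
    (hdisj : Pairwise (Function.onFun Disjoint Yn)) (hunion : (⋃ m, Yn m) = Yᶜ)
    (hdiam : Tendsto (fun m => Metric.diam (Yn m)) atTop (nhds 0)) :
    (∃ C : ℕ → Set X, (∀ m, IsClopen (C m)) ∧ Y = ⋂ m, C m) ∧
      ∃ h : X → ℂ, Continuous h ∧ (∀ y ∈ Y, h y = 1) ∧
        (∀ x ∉ Y, ‖h x‖ < 1) ∧
        ∀ ε > 0, ∃ (m : ℕ) (c : Fin m → ℂ) (E : Fin m → Set X),
          (∀ i, IsClopen (E i)) ∧
          ∀ x, ‖h x - ∑ i, c i * (E i).indicator 1 x‖ ≤ ε :=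
  stmt4_general Y Yn hclopen hdisj hunion
end

section
/- Let X be a compact metric space, Y a closed subset, and (Y_n) pairwise disjoint nonempty clopen subsets of X with ⋃ Y_n = X \ Y and diam(Y_n) → 0. Let F : X → ℂ be continuous, fix x ∈ Y and r > 0 with F = 0 on closedBall(x,r) ∩ Y, and let S = {n : Y_n ∩ closedBall(x,r) ≠ ∅}. Define U = ⋃_{n∈S} Y_n and f̃ = (1 − χ_U)·F. Then f̃ is continuous on X and vanishes on X ∩ ball(x,r). -/
open Set Metric Filter Topology

/-!
Writing `f̃ = 𝟙_{Uᶜ} · F`, continuity reduces to `F` vanishing on `frontier U`, and it suffices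
to show `frontier U ⊆ closedBall x r ∩ Y`. A frontier point of a union of some of the pieces lies
in no piece, since each piece is an open set either inside `U` or disjoint from it; hence it lies
in `Y`. Near such a point only pieces of large index meet `U`, and those are small and meet
`closedBall x r`, so the point is in the closure of that ball.
-/

theorem frontier_biUnion_subset_compl_iUnion {X ι : Type*} [TopologicalSpace X]
    {Yn : ι → Set X} (hopen : ∀ i, IsOpen (Yn i)) (hdisj : Pairwise (Function.onFun Disjoint Yn))
    (S : Set ι) : frontier (⋃ i ∈ S, Yn i) ⊆ (⋃ i, Yn i)ᶜ := by
  rintro z ⟨hcl, hint⟩ hz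
  obtain ⟨i, hi⟩ := mem_iUnion.1 hz
  by_cases hiS : i ∈ S
  · exact hint ((hopen i).subset_interior_iff.2 (subset_biUnion_of_mem hiS) hi)
  · obtain ⟨w, hwi, hwU⟩ := mem_closure_iff.1 hcl _ (hopen i) hi
    obtain ⟨j, hjS, hwj⟩ := mem_iUnion₂.1 hwU
    exact (hdisj (ne_of_mem_of_not_mem hjS hiS).symm).ne_of_mem hwi hwj rfl

theorem mem_closure_of_mem_closure_biUnion {X : Type*} [PseudoMetricSpace X] {Yn : ℕ → Set X}
    (hclosed : ∀ n, IsClosed (Yn n)) (hbdd : ∀ n, Bornology.IsBounded (Yn n))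
    (hdiam : Tendsto (fun n => diam (Yn n)) atTop (𝓝 0)) {K : Set X} {S : Set ℕ}
    (hS : ∀ n ∈ S, (Yn n ∩ K).Nonempty) {z : X} (hz : z ∈ closure (⋃ n ∈ S, Yn n))
    (hzY : z ∉ ⋃ n, Yn n) : z ∈ closure K := by
  refine Metric.mem_closure_iff.2 fun ε hε => ?_
  obtain ⟨N, hN⟩ := Metric.tendsto_atTop.1 hdiam (ε / 2) (half_pos hε)
  have hfar : (⋃ n < N, Yn n)ᶜ ∈ 𝓝 z :=
    ((finite_lt_nat N).isClosed_biUnion fun n _ => hclosed n).isOpen_compl.mem_nhds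
      fun h => hzY (iUnion₂_subset_iUnion _ _ h)
  obtain ⟨w, ⟨hwz, hwfar⟩, hwU⟩ :=
    mem_closure_iff_nhds.1 hz _ (inter_mem (ball_mem_nhds z (half_pos hε)) hfar)
  obtain ⟨n, hnS, hwn⟩ := mem_iUnion₂.1 hwU
  have hNn : N ≤ n := not_lt.1 fun h => hwfar (mem_biUnion h hwn)
  obtain ⟨k, hkn, hkK⟩ := hS n hnS
  have hwk : dist w k < ε / 2 := (dist_le_diam_of_mem (hbdd n) hwn hkn).trans_lt
    (by simpa [abs_of_nonneg diam_nonneg] using hN n hNn)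
  refine ⟨k, hkK, ?_⟩
  calc dist z k ≤ dist z w + dist w k := dist_triangle _ _ _
    _ < ε / 2 + ε / 2 := add_lt_add (by rwa [dist_comm]) hwk
    _ = ε := add_halves ε

theorem stmt5_general {X : Type*} [MetricSpace X] [CompactSpace X]
    (Y : Set X)
    (Yn : ℕ → Set X) (hclopen : ∀ m, IsClopen (Yn m))
    (hdisj : Pairwise (Function.onFun Disjoint Yn)) (hunion : (⋃ m, Yn m) = Yᶜ)
    (hdiam : Tendsto (fun m => Metric.diam (Yn m)) atTop (nhds 0))
    (F : X → ℂ) (hF : Continuous F)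
    (x : X) (r : ℝ)
    (hvan : ∀ z ∈ closedBall x r ∩ Y, F z = 0)
    (U : Set X) (hU : U = ⋃ m ∈ {m | (Yn m ∩ closedBall x r).Nonempty}, Yn m) :
    Continuous (fun z => (1 - U.indicator (1 : X → ℂ) z) * F z) ∧
      ∀ z ∈ ball x r, (1 - U.indicator (1 : X → ℂ) z) * F z = 0 := by
  have hfrontier : frontier U ⊆ closedBall x r ∩ Y := by
    intro z hz
    rw [hU] at hz
    have hzY := frontier_biUnion_subset_compl_iUnion (fun m => (hclopen m).isOpen) hdisj _ hz
    refine ⟨isClosed_closedBall.closure_subset ?_, by simpa [hunion] using hzY⟩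
    exact mem_closure_of_mem_closure_biUnion (fun m => (hclopen m).isClosed)
      (fun _ => isBounded_of_compactSpace) hdiam (fun _ hm => hm) hz.1 hzY
  have hfun : ∀ z, (1 - U.indicator (1 : X → ℂ) z) * F z = Uᶜ.indicator F z := by
    intro z
    by_cases hz : z ∈ U <;> simp [hz]
  simp only [hfun]
  refine ⟨continuous_indicator (fun z hz => hvan z (hfrontier (frontier_compl U ▸ hz)))
    hF.continuousOn, fun z hz => ?_⟩
  by_cases hzU : z ∈ U
  · simp [hzU]
  · rw [indicator_of_mem (mem_compl hzU)]
    refine hvan z ⟨ball_subset_closedBall hz, not_not.1 fun hzY => ?_⟩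
    obtain ⟨m, hm⟩ := mem_iUnion.1 (hunion ▸ hzY : z ∈ ⋃ m, Yn m)
    exact hzU (hU ▸ mem_biUnion ⟨z, hm, ball_subset_closedBall hz⟩ hm)

/-- The modification `f̃ = (1 - χ_U)·F` is continuous on `X` and vanishes on `ball x r`,
where `U` is the union of those clopen pieces `Yn n` meeting `closedBall x r`. -/
theorem stmt5 {X : Type*} [MetricSpace X] [CompactSpace X]
    (Y : Set X) (hYcl : IsClosed Y) (hYne : Y.Nonempty)
    (Yn : ℕ → Set X) (hclopen : ∀ m, IsClopen (Yn m)) (hne : ∀ m, (Yn m).Nonempty)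
    (hdisj : Pairwise (Function.onFun Disjoint Yn)) (hunion : (⋃ m, Yn m) = Yᶜ)
    (hdiam : Tendsto (fun m => Metric.diam (Yn m)) atTop (nhds 0))
    (F : X → ℂ) (hF : Continuous F)
    (x : X) (hx : x ∈ Y) (r : ℝ) (hr : 0 < r)
    (hvan : ∀ z ∈ closedBall x r ∩ Y, F z = 0)
    (U : Set X) (hU : U = ⋃ m ∈ {m | (Yn m ∩ closedBall x r).Nonempty}, Yn m) :
    Continuous (fun z => (1 - U.indicator (1 : X → ℂ) z) * F z) ∧
      ∀ z ∈ ball x r, (1 - U.indicator (1 : X → ℂ) z) * F z = 0 :=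
  stmt5_general Y Yn hclopen hdisj hunion hdiam F hF x r hvan U hU
end

section
/- In the setting of the previous construction, with U_m = ⋃_{k=1}^m Y_{n_k} (where S = {n_1 < n_2 < ⋯} is infinite) and V_m = ⋃_{k>m} Y_{n_k}, we have sup_{z ∈ V_m} |F(z)| → 0 as m → ∞, and hence (1 − χ_{U_m})F converges uniformly on X to (1 − χ_U)F. -/
/-!
A point of `Yₙ`, for `n` large, is close (`diam Yₙ → 0`) to a point of `Yₙ ∩ closedBall x r`.
So a limit of points `zⱼ ∈ Y_{n_{kⱼ}}` lies in the closed ball, and also in `Y`, because the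
open sets `Yₘ` are pairwise disjoint and each one eventually misses the `Y_{n_{kⱼ}}`. Hence
`F → 0` along such sequences, which by compactness means `sup_{V_m} ‖F‖ → 0`. Since
`U \ U_m ⊆ V_m`, this is exactly the uniform convergence of `(1 - χ_{U_m}) F` to `(1 - χ_U) F`.
-/

open Set Metric Filter Topology

theorem mem_of_tendsto_of_mem_pieces {ι X : Type*} [TopologicalSpace X] {l : Filter ι}
    [l.NeBot] {Y : Set X} {Yn : ℕ → Set X} (hopen : ∀ m, IsOpen (Yn m))
    (hdisj : Pairwise (Function.onFun Disjoint Yn)) (hunion : ⋃ m, Yn m = Yᶜ)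
    {n : ι → ℕ} (hn : Tendsto n l atTop) {z : ι → X} (hz : ∀ j, z j ∈ Yn (n j))
    {z₀ : X} (hz₀ : Tendsto z l (𝓝 z₀)) : z₀ ∈ Y := by
  by_contra hz₀Y
  obtain ⟨m, hm⟩ := mem_iUnion.mp (hunion ▸ hz₀Y : z₀ ∈ ⋃ m, Yn m)
  obtain ⟨j, hzj, hnj⟩ :=
    ((hz₀.eventually ((hopen m).eventually_mem hm)).and (hn.eventually_gt_atTop m)).exists
  exact disjoint_left.mp (hdisj hnj.ne') (hz j) hzj

theorem tendsto_dist_of_mem_pieces {ι X : Type*} [PseudoMetricSpace X] {l : Filter ι}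
    {Yn : ℕ → Set X} (hbdd : ∀ m, Bornology.IsBounded (Yn m))
    (hdiam : Tendsto (fun m => diam (Yn m)) atTop (𝓝 0)) {n : ι → ℕ} (hn : Tendsto n l atTop)
    {z w : ι → X} (hz : ∀ j, z j ∈ Yn (n j)) (hw : ∀ j, w j ∈ Yn (n j)) :
    Tendsto (fun j => dist (z j) (w j)) l (𝓝 0) :=
  squeeze_zero (fun _ => dist_nonneg) (fun j => dist_le_diam_of_mem (hbdd _) (hz j) (hw j))
    (hdiam.comp hn)

theorem eventually_forall_norm_le_of_meets {X E : Type*} [PseudoMetricSpace X]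
    [CompactSpace X] [SeminormedAddCommGroup E] {Y K : Set X} {Yn : ℕ → Set X} (hopen : ∀ m, IsOpen (Yn m))
    (hdisj : Pairwise (Function.onFun Disjoint Yn)) (hunion : ⋃ m, Yn m = Yᶜ)
    (hdiam : Tendsto (fun m => diam (Yn m)) atTop (𝓝 0)) {F : X → E} (hF : Continuous F)
    (hK : IsClosed K) (hvan : ∀ z ∈ K ∩ Y, F z = 0) {n : ℕ → ℕ} (hn : Tendsto n atTop atTop)
    (hmeet : ∀ j, (Yn (n j) ∩ K).Nonempty) {ε : ℝ} (hε : 0 < ε) :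
    ∀ᶠ j in atTop, ∀ z ∈ Yn (n j), ‖F z‖ ≤ ε := by
  by_contra h
  simp only [not_eventually, not_forall, not_le, exists_prop] at h
  obtain ⟨φ, hφ, hbig⟩ := extraction_of_frequently_atTop h
  choose z hz hFz using hbig
  obtain ⟨z₀, -, ψ, hψ, hz₀⟩ := isCompact_univ.tendsto_subseq fun j => mem_univ (z j)
  choose w hw using hmeet
  have hnφψ : Tendsto (fun j => n (φ (ψ j))) atTop atTop :=
    hn.comp (hφ.comp hψ).tendsto_atTop
  have hw₀ : Tendsto (fun j => w (φ (ψ j))) atTop (𝓝 z₀) :=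
    hz₀.congr_dist <| tendsto_dist_of_mem_pieces (fun _ => isBounded_of_compactSpace) hdiam
      hnφψ (fun j => hz (ψ j)) (fun j => (hw _).1)
  have hz₀K : z₀ ∈ K := hK.mem_of_tendsto hw₀ (.of_forall fun j => (hw _).2)
  have hz₀Y : z₀ ∈ Y :=
    mem_of_tendsto_of_mem_pieces hopen hdisj hunion hnφψ (fun j => hz (ψ j)) hz₀
  have hFz₀ : Tendsto (fun j => ‖F (z (ψ j))‖) atTop (𝓝 0) := by
    simpa [hvan z₀ ⟨hz₀K, hz₀Y⟩] using ((hF.tendsto z₀).comp hz₀).norm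
  exact hε.not_ge (ge_of_tendsto hFz₀ (.of_forall fun j => (hFz (ψ j)).le))

theorem tendstoUniformly_one_sub_indicator_mul {ι X 𝕜 : Type*} [NormedRing 𝕜] {l : Filter ι}
    {A : ι → Set X} {B : Set X} {F : X → 𝕜} (hAB : ∀ i, A i ⊆ B)
    (hsmall : ∀ ε > 0, ∀ᶠ i in l, ∀ z ∈ B \ A i, ‖F z‖ ≤ ε) :
    TendstoUniformly (fun i z => (1 - (A i).indicator 1 z) * F z)
      (fun z => (1 - B.indicator 1 z) * F z) l := by
  rw [Metric.tendstoUniformly_iff]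
  intro ε hε
  filter_upwards [hsmall (ε / 2) (half_pos hε)] with i hi z
  by_cases hA : z ∈ A i
  · simp [indicator_of_mem hA, indicator_of_mem (hAB i hA), hε]
  by_cases hB : z ∈ B
  · simpa [indicator_of_mem hB, indicator_of_notMem hA] using
      (hi z ⟨hB, hA⟩).trans_lt (half_lt_self hε)
  · simp [indicator_of_notMem hB, indicator_of_notMem hA, hε]

theorem stmt6_general {X : Type*} [MetricSpace X] [CompactSpace X]
    (Y : Set X)
    (Yn : ℕ → Set X) (hclopen : ∀ m, IsClopen (Yn m))
    (hdisj : Pairwise (Function.onFun Disjoint Yn)) (hunion : (⋃ m, Yn m) = Yᶜ)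
    (hdiam : Tendsto (fun m => Metric.diam (Yn m)) atTop (nhds 0))
    (F : X → ℂ) (hF : Continuous F)
    (x : X) (r : ℝ)
    (hvan : ∀ z ∈ closedBall x r ∩ Y, F z = 0)
    (nk : ℕ → ℕ) (hmono : StrictMono nk)
    (henum : ∀ m, (Yn m ∩ closedBall x r).Nonempty ↔ ∃ k, nk k = m)
    (U : Set X) (hU : U = ⋃ m ∈ {m | (Yn m ∩ closedBall x r).Nonempty}, Yn m) :
    (∀ ε > 0, ∃ M : ℕ, ∀ m ≥ M, ∀ z ∈ ⋃ k ∈ {k | m ≤ k}, Yn (nk k),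
        ‖F z‖ ≤ ε) ∧
      TendstoUniformly
        (fun m z => (1 - (⋃ k ∈ Finset.range m, Yn (nk k)).indicator (1 : X → ℂ) z) * F z)
        (fun z => (1 - U.indicator (1 : X → ℂ) z) * F z) atTop := by
  have hU_iUnion : U = ⋃ k, Yn (nk k) := by
    ext z
    simp only [hU, mem_iUnion, mem_ofPred_eq, exists_prop, henum]
    exact ⟨fun ⟨_, ⟨k, hk⟩, hz⟩ => ⟨k, hk ▸ hz⟩, fun ⟨k, hz⟩ => ⟨_, ⟨k, rfl⟩, hz⟩⟩
  have htail : ∀ ε > 0, ∀ᶠ m in atTop, ∀ z ∈ ⋃ k ∈ {k | m ≤ k}, Yn (nk k), ‖F z‖ ≤ ε := by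
    intro ε hε
    obtain ⟨M, hM⟩ := eventually_atTop.mp <|
      eventually_forall_norm_le_of_meets (fun m => (hclopen m).isOpen) hdisj hunion hdiam hF
        isClosed_closedBall hvan hmono.tendsto_atTop (fun k => (henum _).mpr ⟨k, rfl⟩) hε
    filter_upwards [eventually_ge_atTop M] with m hm z hz
    obtain ⟨k, hk, hzk⟩ := mem_iUnion₂.mp hz
    exact hM k (hm.trans hk) z hzk
  have hUm : ∀ m, ⋃ k ∈ Finset.range m, Yn (nk k) ⊆ U := fun m =>
    hU_iUnion ▸ iUnion₂_subset fun k _ => subset_iUnion (fun k => Yn (nk k)) k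
  have hUV : ∀ m,
      U \ ⋃ k ∈ Finset.range m, Yn (nk k) ⊆ ⋃ k ∈ {k | m ≤ k}, Yn (nk k) := by
    rintro m z ⟨hzU, hzUm⟩
    obtain ⟨k, hzk⟩ := mem_iUnion.mp (hU_iUnion ▸ hzU)
    have hmk : m ≤ k := not_lt.mp fun hkm =>
      hzUm (mem_iUnion₂.mpr ⟨k, Finset.mem_range.mpr hkm, hzk⟩)
    exact mem_iUnion₂.mpr ⟨k, hmk, hzk⟩
  exact ⟨fun ε hε => eventually_atTop.mp (htail ε hε),
    tendstoUniformly_one_sub_indicator_mul hUm fun ε hε =>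
      (htail ε hε).mono fun m hm z hz => hm z (hUV m hz)⟩

/-- With `S = {m | Yn m meets closedBall x r}` infinite, enumerated increasingly by `nk`,
`U_m = ⋃_{k<m} Yn (nk k)` and `V_m = ⋃_{k≥m} Yn (nk k)`: the sup of `|F|` over `V_m`
tends to `0`, and `(1 - χ_{U_m})F → (1 - χ_U)F` uniformly on `X`. -/
theorem stmt6 {X : Type*} [MetricSpace X] [CompactSpace X]
    (Y : Set X) (hYcl : IsClosed Y) (hYne : Y.Nonempty)
    (Yn : ℕ → Set X) (hclopen : ∀ m, IsClopen (Yn m)) (hne : ∀ m, (Yn m).Nonempty)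
    (hdisj : Pairwise (Function.onFun Disjoint Yn)) (hunion : (⋃ m, Yn m) = Yᶜ)
    (hdiam : Tendsto (fun m => Metric.diam (Yn m)) atTop (nhds 0))
    (F : X → ℂ) (hF : Continuous F)
    (x : X) (hx : x ∈ Y) (r : ℝ) (hr : 0 < r)
    (hvan : ∀ z ∈ closedBall x r ∩ Y, F z = 0)
    (nk : ℕ → ℕ) (hmono : StrictMono nk)
    (henum : ∀ m, (Yn m ∩ closedBall x r).Nonempty ↔ ∃ k, nk k = m)
    (U : Set X) (hU : U = ⋃ m ∈ {m | (Yn m ∩ closedBall x r).Nonempty}, Yn m) :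
    (∀ ε > 0, ∃ M : ℕ, ∀ m ≥ M, ∀ z ∈ ⋃ k ∈ {k | m ≤ k}, Yn (nk k),
        ‖F z‖ ≤ ε) ∧
      TendstoUniformly
        (fun m z => (1 - (⋃ k ∈ Finset.range m, Yn (nk k)).indicator (1 : X → ℂ) z) * F z)
        (fun z => (1 - U.indicator (1 : X → ℂ) z) * F z) atTop :=
  stmt6_general Y Yn hclopen hdisj hunion hdiam F hF x r hvan nk hmono henum U hU
end

section
/- Suppose there exist a compact plane set X and a nondegenerate closed interval J ⊆ ℝ with J ⊆ X such that R(X) is not regular but every point of X \ J is a point of continuity for R(X). Then: (a) for every nonempty compact K ⊆ X \ J, R(K) is regular; (b) J is not clopen in X; (c) X ≠ J. -/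
open Set Metric Filter Topology

noncomputable section

/-- `g` is (on `K`) a rational function with no poles on `K`. -/
def RatOn (K : Set ℂ) (g : ℂ → ℂ) : Prop :=
  ∃ p q : Polynomial ℂ, (∀ z ∈ K, q.eval z ≠ 0) ∧ ∀ z ∈ K, g z = p.eval z / q.eval z

/-- `f ∈ R(K)`: uniform limit on `K` of rational functions with poles off `K`. -/
def Rmem (K : Set ℂ) (f : ℂ → ℂ) : Prop :=
  ContinuousOn f K ∧ ∀ ε > 0, ∃ g, RatOn K g ∧ ∀ z ∈ K, ‖f z - g z‖ ≤ ε

/-- `f` vanishes on a `K`-neighbourhood of `x` (membership in the ideal `J_x^K`). -/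
def VanishNear (K : Set ℂ) (x : ℂ) (f : ℂ → ℂ) : Prop :=
  ∃ U, IsOpen U ∧ x ∈ U ∧ ∀ z ∈ K ∩ U, f z = 0

/-- `x` is an R-point for `R(K)`: `J_x^K ⊄ M_y^K` for all `y ∈ K \ {x}`. -/
def RPoint (K : Set ℂ) (x : ℂ) : Prop :=
  ∀ y ∈ K, y ≠ x → ∃ f, Rmem K f ∧ VanishNear K x f ∧ f y ≠ 0

/-- `x` is a point of continuity for `R(K)`: `J_y^K ⊄ M_x^K` for all `y ∈ K \ {x}`. -/
def PointOfCont (K : Set ℂ) (x : ℂ) : Prop :=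
  ∀ y ∈ K, y ≠ x → ∃ f, Rmem K f ∧ VanishNear K y f ∧ f x ≠ 0

/-- `R(K)` is regular. -/
def RegularR (K : Set ℂ) : Prop :=
  ∀ F ⊆ K, IsClosed F → ∀ y ∈ K \ F, ∃ f, Rmem K f ∧ f y = 1 ∧ ∀ z ∈ F, f z = 0

/-- `S` is relatively clopen in `X`. -/
def RelClopen (X S : Set ℂ) : Prop :=
  (∃ U, IsOpen U ∧ S = X ∩ U) ∧ (∃ C, IsClosed C ∧ S = X ∩ C)

/-!
Compactness turns "every point is a point of continuity" into regularity: to separate `y` from a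
closed `F`, multiply finitely many functions that vanish near points of `F` and not at `y`. Points
of continuity for `R(X)` stay points of continuity for `R(K)`, `K ⊆ X`, which gives (a). On the
interval `J` the Weierstrass theorem approximates real bump functions by polynomials, so `R(J)` is
regular, which gives (c).

For (b), if `J` were clopen in `X`, then `X \ J` would lie at positive distance from `J`, and the
indicator of `J` would belong to `R(X)`: on `X` it is the Cauchy integral `(2πi)⁻¹ ∮ dz / (z - w)`
over the boundary of a thin rectangle around `J`, and the Riemann sums of this integral are
rational functions with poles on the rectangle, hence off `X`. Multiplying polynomial bumps on `J`
by this indicator makes every point of `J` a point of continuity for `R(X)`, so `R(X)` would be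
regular.
-/

open Complex
open scoped Interval NNReal

section RationalApproximation

variable {K : Set ℂ} {f g : ℂ → ℂ}

lemma ratOn_polynomial (K : Set ℂ) (P : Polynomial ℂ) : RatOn K (fun z => P.eval z) :=
  ⟨P, 1, fun _ _ => by simp, fun _ _ => by simp⟩

lemma ratOn_const (K : Set ℂ) (c : ℂ) : RatOn K (fun _ => c) :=
  ⟨Polynomial.C c, 1, fun _ _ => by simp, fun _ _ => by simp⟩

lemma ratOn_div_sub (c : ℂ) {ζ : ℂ} (hζ : ζ ∉ K) : RatOn K (fun z => c / (ζ - z)) :=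
  ⟨Polynomial.C c, Polynomial.C ζ - Polynomial.X,
    fun z hz => by simpa [sub_eq_zero] using (ne_of_mem_of_not_mem hz hζ).symm,
    fun _ _ => by simp⟩

lemma RatOn.add (hf : RatOn K f) (hg : RatOn K g) : RatOn K (fun z => f z + g z) := by
  obtain ⟨p₁, q₁, hq₁, hf⟩ := hf
  obtain ⟨p₂, q₂, hq₂, hg⟩ := hg
  refine ⟨p₁ * q₂ + p₂ * q₁, q₁ * q₂, fun z hz => by simp [hq₁ z hz, hq₂ z hz],
    fun z hz => ?_⟩
  simp only [hf z hz, hg z hz, Polynomial.eval_add, Polynomial.eval_mul]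
  rw [div_add_div _ _ (hq₁ z hz) (hq₂ z hz), mul_comm (p₂.eval z)]

lemma RatOn.mul (hf : RatOn K f) (hg : RatOn K g) : RatOn K (fun z => f z * g z) := by
  obtain ⟨p₁, q₁, hq₁, hf⟩ := hf
  obtain ⟨p₂, q₂, hq₂, hg⟩ := hg
  refine ⟨p₁ * p₂, q₁ * q₂, fun z hz => by simp [hq₁ z hz, hq₂ z hz], fun z hz => ?_⟩
  simp only [hf z hz, hg z hz, Polynomial.eval_mul, div_mul_div_comm]

lemma ratOn_sum {ι : Type*} (s : Finset ι) {f : ι → ℂ → ℂ} (h : ∀ i ∈ s, RatOn K (f i)) :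
    RatOn K (fun z => ∑ i ∈ s, f i z) := by
  classical
  induction s using Finset.induction with
  | empty => simpa using ratOn_const K 0
  | insert i s hi ih =>
    simp only [Finset.sum_insert hi]
    exact (h i (s.mem_insert_self i)).add (ih fun j hj => h j (Finset.mem_insert_of_mem hj))

lemma RatOn.continuousOn (hg : RatOn K g) : ContinuousOn g K := by
  obtain ⟨p, q, hq, hg⟩ := hg
  exact (p.continuous.continuousOn.div q.continuous.continuousOn hq).congr hg

lemma rmem_of_approx (h : ∀ ε > 0, ∃ g, RatOn K g ∧ ∀ z ∈ K, ‖f z - g z‖ ≤ ε) : Rmem K f := by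
  refine ⟨continuousOn_of_uniform_approx_of_continuousOn fun u hu => ?_, h⟩
  obtain ⟨ε, hε, hεu⟩ := Metric.mem_uniformity_dist.1 hu
  obtain ⟨g, hg, hfg⟩ := h (ε / 2) (half_pos hε)
  exact ⟨g, hg.continuousOn, fun z hz => hεu (by rw [dist_eq_norm]; linarith [hfg z hz])⟩

lemma RatOn.rmem (hg : RatOn K g) : Rmem K g :=
  rmem_of_approx fun _ hε => ⟨g, hg, fun _ _ => by simpa using hε.le⟩

lemma rmem_const (K : Set ℂ) (c : ℂ) : Rmem K (fun _ => c) :=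
  (ratOn_const K c).rmem

lemma Rmem.of_approx (h : ∀ ε > 0, ∃ g, Rmem K g ∧ ∀ z ∈ K, ‖f z - g z‖ ≤ ε) : Rmem K f := by
  refine rmem_of_approx fun ε hε => ?_
  obtain ⟨g, hg, hfg⟩ := h (ε / 2) (half_pos hε)
  obtain ⟨r, hr, hgr⟩ := hg.2 (ε / 2) (half_pos hε)
  refine ⟨r, hr, fun z hz => ?_⟩
  calc ‖f z - r z‖ = ‖(f z - g z) + (g z - r z)‖ := by rw [sub_add_sub_cancel]
    _ ≤ ε := (norm_add_le _ _).trans (by linarith [hfg z hz, hgr z hz])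

lemma Rmem.congr (hf : Rmem K f) (h : EqOn f g K) : Rmem K g :=
  Rmem.of_approx fun _ hε => ⟨f, hf, fun z hz => by simpa [h hz] using hε.le⟩

lemma Rmem.mono {L : Set ℂ} (hLK : L ⊆ K) (hf : Rmem K f) : Rmem L f := by
  refine rmem_of_approx fun ε hε => ?_
  obtain ⟨g, ⟨p, q, hq, hg⟩, hfg⟩ := hf.2 ε hε
  exact ⟨g, ⟨p, q, fun z hz => hq z (hLK hz), fun z hz => hg z (hLK hz)⟩,
    fun z hz => hfg z (hLK hz)⟩

lemma Rmem.add (hf : Rmem K f) (hg : Rmem K g) : Rmem K (fun z => f z + g z) := by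
  refine rmem_of_approx fun ε hε => ?_
  obtain ⟨r, hr, hfr⟩ := hf.2 (ε / 2) (half_pos hε)
  obtain ⟨s, hs, hgs⟩ := hg.2 (ε / 2) (half_pos hε)
  refine ⟨fun z => r z + s z, hr.add hs, fun z hz => ?_⟩
  calc ‖f z + g z - (r z + s z)‖ = ‖(f z - r z) + (g z - s z)‖ := by ring_nf
    _ ≤ ε := (norm_add_le _ _).trans (by linarith [hfr z hz, hgs z hz])

lemma Rmem.exists_bound (hK : IsCompact K) (hf : Rmem K f) :
    ∃ M, 0 ≤ M ∧ ∀ z ∈ K, ‖f z‖ ≤ M := by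
  obtain ⟨M, hM⟩ := hK.exists_bound_of_continuousOn hf.1
  exact ⟨max M 0, le_max_right _ _, fun z hz => (hM z hz).trans (le_max_left _ _)⟩

lemma Rmem.mul (hK : IsCompact K) (hf : Rmem K f) (hg : Rmem K g) :
    Rmem K (fun z => f z * g z) := by
  refine rmem_of_approx fun ε hε => ?_
  obtain ⟨M, hM, hfM, hgM⟩ : ∃ M, 0 ≤ M ∧ (∀ z ∈ K, ‖f z‖ ≤ M) ∧ ∀ z ∈ K, ‖g z‖ ≤ M := by
    obtain ⟨Mf, hMf, hf⟩ := hf.exists_bound hK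
    obtain ⟨Mg, hMg, hg⟩ := hg.exists_bound hK
    exact ⟨max Mf Mg, le_max_of_le_left hMf, fun z hz => (hf z hz).trans (le_max_left _ _),
      fun z hz => (hg z hz).trans (le_max_right _ _)⟩
  set η := min 1 (ε / (2 * M + 1))
  have hη : 0 < η := lt_min one_pos (by positivity)
  have hηε : (2 * M + 1) * η ≤ ε := by
    have := min_le_right 1 (ε / (2 * M + 1))
    rwa [le_div_iff₀ (by positivity), mul_comm] at this
  obtain ⟨r, hr, hfr⟩ := hf.2 η hη
  obtain ⟨s, hs, hgs⟩ := hg.2 η hη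
  refine ⟨fun z => r z * s z, hr.mul hs, fun z hz => ?_⟩
  have hsM : ‖s z‖ ≤ M + 1 := by
    have := norm_sub_norm_le (s z) (g z)
    rw [norm_sub_rev] at this
    linarith [hgs z hz, hgM z hz, min_le_left 1 (ε / (2 * M + 1))]
  calc ‖f z * g z - r z * s z‖ = ‖f z * (g z - s z) + s z * (f z - r z)‖ := by ring_nf
    _ ≤ M * η + (M + 1) * η := by
      refine (norm_add_le _ _).trans ?_
      rw [norm_mul, norm_mul]
      gcongr
      exacts [hfM z hz, hgs z hz, hfr z hz]
    _ ≤ ε := by linarith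

end RationalApproximation

lemma PointOfCont.mono {K L : Set ℂ} {x : ℂ} (hLK : L ⊆ K) (h : PointOfCont K x) :
    PointOfCont L x := by
  intro y hy hyx
  obtain ⟨f, hf, ⟨U, hU, hyU, hfU⟩, hfx⟩ := h y (hLK hy) hyx
  exact ⟨f, hf.mono hLK, ⟨U, hU, hyU, fun z hz => hfU z ⟨hLK hz.1, hz.2⟩⟩, hfx⟩

lemma regularR_of_forall_pointOfCont {K : Set ℂ} (hK : IsCompact K)
    (h : ∀ x ∈ K, PointOfCont K x) : RegularR K := by
  intro F hFK hF y ⟨hyK, hyF⟩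
  obtain ⟨f, hf, hfy, U, -, hFU, hfU⟩ : ∃ f, Rmem K f ∧ f y ≠ 0 ∧
      ∃ U, IsOpen U ∧ F ⊆ U ∧ ∀ z ∈ K ∩ U, f z = 0 := by
    refine (hK.of_isClosed_subset hF hFK).induction_on ?_ ?_ ?_ ?_
    · exact ⟨fun _ => 1, rmem_const K 1, one_ne_zero, ∅, isOpen_empty, subset_rfl, by simp⟩
    · intro s t hst ht
      exact ht.imp fun f ⟨hf, hfy, U, hU, htU, hfU⟩ =>
        ⟨hf, hfy, U, hU, hst.trans htU, hfU⟩
    · intro s t hs ht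
      obtain ⟨f, hf, hfy, U, hU, hsU, hfU⟩ := hs
      obtain ⟨g, hg, hgy, V, hV, htV, hgV⟩ := ht
      refine ⟨fun z => f z * g z, hf.mul hK hg, mul_ne_zero hfy hgy, U ∪ V, hU.union hV,
        union_subset_union hsU htV, fun z ⟨hzK, hz⟩ => ?_⟩
      rcases hz with hz | hz
      · simp [hfU z ⟨hzK, hz⟩]
      · simp [hgV z ⟨hzK, hz⟩]
    · intro x hx
      obtain ⟨f, hf, ⟨U, hU, hxU, hfU⟩, hfy⟩ := h y hyK x (hFK hx) fun hxy => hyF (hxy ▸ hx)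
      exact ⟨U, mem_nhdsWithin_of_mem_nhds (hU.mem_nhds hxU), f, hf, hfy, U, hU, subset_rfl,
        hfU⟩
  refine ⟨fun z => (f y)⁻¹ * f z, (rmem_const K _).mul hK hf, inv_mul_cancel₀ hfy,
    fun z hz => ?_⟩
  simp [hfU z ⟨hFK hz, hFU hz⟩]

lemma exists_bump_segment (a b : ℝ) {u s : ℝ} (hus : u ≠ s) :
    ∃ g : ℂ → ℂ, (∃ U, IsOpen U ∧ (u : ℂ) ∈ U ∧ ∀ z ∈ U, g z = 0) ∧ g s = 1 ∧
      ∀ ε > 0, ∃ P : Polynomial ℂ, ∀ z ∈ ofReal '' Icc a b, ‖g z - P.eval z‖ ≤ ε := by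
  set r := |s - u|
  have hr : 0 < r := abs_pos.2 (sub_ne_zero.2 hus.symm)
  set F : ℝ → ℝ := fun t => max 0 (2 * |t - u| - r) / r
  have hF : Continuous F := by fun_prop
  refine ⟨fun z => F z.re, ⟨re ⁻¹' {t | |t - u| < r / 2}, ?_, by simpa using hr, ?_⟩,
    ?_, fun ε hε => ?_⟩
  · exact (isOpen_lt (by fun_prop) continuous_const).preimage continuous_re
  · intro z hz
    simp [F, show 2 * |z.re - u| - r ≤ 0 by simp at hz; linarith]
  · have : F s = 1 := by
      simp only [F]
      rw [max_eq_right (by linarith), show 2 * r - r = r by ring, div_self hr.ne']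
    simp [this]
  · obtain ⟨P, hP⟩ := exists_polynomial_near_of_continuousOn a b F hF.continuousOn ε hε
    refine ⟨P.map ofRealHom, ?_⟩
    rintro _ ⟨t, ht, rfl⟩
    have hPt : (P.map ofRealHom).eval (t : ℂ) = ((P.eval t : ℝ) : ℂ) := by
      rw [Polynomial.eval_map]
      exact P.eval₂_at_apply ofRealHom t
    simp only [hPt, ofReal_re]
    rw [← ofReal_sub, norm_real, Real.norm_eq_abs, abs_sub_comm]
    exact (hP t ht).le

lemma pointOfCont_of_rmem_indicator {X : Set ℂ} {a b : ℝ} (hX : IsCompact X)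
    (hχ : Rmem X ((ofReal '' Icc a b).indicator 1)) {x : ℂ}
    (hx : x ∈ ofReal '' Icc a b) : PointOfCont X x := by
  set J := ofReal '' Icc a b
  have hJ : IsClosed J := (isCompact_Icc.image continuous_ofReal).isClosed
  intro y hy hyx
  by_cases hyJ : y ∈ J
  · obtain ⟨s, hs, rfl⟩ := hx
    obtain ⟨u, -, rfl⟩ := hyJ
    obtain ⟨g, ⟨U, hU, huU, hgU⟩, hgs, hg⟩ :=
      exists_bump_segment a b fun h : u = s => hyx (congrArg _ h)
    refine ⟨fun z => g z * J.indicator 1 z, Rmem.of_approx fun ε hε => ?_,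
      ⟨U, hU, huU, fun z hz => by simp [hgU z hz.2]⟩, by simpa [J, hgs] using hs⟩
    obtain ⟨P, hP⟩ := hg ε hε
    refine ⟨fun z => P.eval z * J.indicator 1 z, (ratOn_polynomial X P).rmem.mul hX hχ,
      fun z _ => ?_⟩
    by_cases hzJ : z ∈ J
    · simpa [hzJ] using hP z hzJ
    · simpa [hzJ] using hε.le
  · refine ⟨J.indicator 1, hχ, ⟨Jᶜ, hJ.isOpen_compl, hyJ, fun z hz => ?_⟩, by simp [hx]⟩
    exact indicator_of_notMem hz.2 _

lemma exists_pos_forall_le_dist {α : Type*} [PseudoMetricSpace α] {s t : Set α}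
    (hs : IsCompact s) (ht : IsClosed t) (hst : Disjoint s t) :
    ∃ r > 0, ∀ x ∈ s, ∀ y ∈ t, r ≤ dist x y := by
  obtain ⟨r, hr, h⟩ := Metric.exists_pos_forall_lt_edist hs ht hst
  refine ⟨r, hr, fun x hx y hy => ?_⟩
  have := h x hx y hy
  rw [edist_nndist, ENNReal.coe_lt_coe, ← NNReal.coe_lt_coe, coe_nndist] at this
  exact this.le

lemma norm_integral_sub_riemannSum_le {g : ℝ → ℂ} {L : ℝ≥0}
    (hg : LipschitzOnWith L g (Icc 0 1)) {n : ℕ} (hn : 0 < n) :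
    ‖(∫ t in (0 : ℝ)..1, g t) - ∑ k ∈ Finset.range n, (n : ℂ)⁻¹ * g (k / n)‖ ≤ L / n := by
  have hn' : (0 : ℝ) < n := Nat.cast_pos.2 hn
  set x : ℕ → ℝ := fun k => k / n
  have hx : ∀ k < n, x (k + 1) - x k = 1 / n := fun k _ => by simp only [x]; push_cast; ring
  have hsub : ∀ k < n, uIcc (x k) (x (k + 1)) ⊆ Icc 0 1 := by
    intro k hk
    rw [uIcc_of_le (by linarith [hx k hk, one_div_pos.2 hn'])]
    refine Icc_subset_Icc (by positivity) ?_
    rw [div_le_one hn']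
    exact_mod_cast hk
  have hint : ∀ k < n, IntervalIntegrable g MeasureTheory.volume (x k) (x (k + 1)) :=
    fun k hk => (hg.continuousOn.mono (hsub k hk)).intervalIntegrable
  have hpiece : ∀ k ∈ Finset.range n,
      ‖(∫ t in x k..x (k + 1), g t) - (n : ℂ)⁻¹ * g (x k)‖ ≤ L / n / n := by
    intro k hk
    rw [Finset.mem_range] at hk
    have hconst : (n : ℂ)⁻¹ * g (x k) = ∫ _ in x k..x (k + 1), g (x k) := by
      rw [intervalIntegral.integral_const, hx k hk, real_smul]
      push_cast
      ring
    rw [hconst, ← intervalIntegral.integral_sub (hint k hk) intervalIntegrable_const]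
    have hbound : ∀ t ∈ Ι (x k) (x (k + 1)), ‖g t - g (x k)‖ ≤ L / n := by
      intro t ht
      have ht' := uIoc_subset_uIcc ht
      have hxk : x k ∈ uIcc (x k) (x (k + 1)) := left_mem_uIcc
      calc ‖g t - g (x k)‖ ≤ L * ‖t - x k‖ :=
            hg.norm_sub_le (hsub k hk ht') (hsub k hk hxk)
        _ ≤ L * (1 / n) := by
            gcongr
            rw [uIcc_of_le (by linarith [hx k hk, one_div_pos.2 hn'])] at ht'
            rw [Real.norm_eq_abs, abs_of_nonneg (by linarith [ht'.1])]
            linarith [hx k hk, ht'.2]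
        _ = L / n := by ring
    refine (intervalIntegral.norm_integral_le_of_norm_le_const hbound).trans_eq ?_
    rw [hx k hk, abs_of_pos (one_div_pos.2 hn')]
    ring
  have hsplit : ∫ t in (0 : ℝ)..1, g t = ∑ k ∈ Finset.range n, ∫ t in x k..x (k + 1), g t := by
    rw [intervalIntegral.sum_integral_adjacent_intervals hint]
    simp [x, hn'.ne']
  calc ‖(∫ t in (0 : ℝ)..1, g t) - ∑ k ∈ Finset.range n, (n : ℂ)⁻¹ * g (k / n)‖
      = ‖∑ k ∈ Finset.range n, ((∫ t in x k..x (k + 1), g t) - (n : ℂ)⁻¹ * g (x k))‖ := by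
        rw [hsplit, Finset.sum_sub_distrib]
    _ ≤ ∑ k ∈ Finset.range n, (L / n / n : ℝ) :=
        (norm_sum_le _ _).trans (Finset.sum_le_sum hpiece)
    _ = L / n := by
        rw [Finset.sum_const, Finset.card_range, nsmul_eq_mul]
        field_simp

def segmentInvIntegral (p q w : ℂ) : ℂ :=
  ∫ t in (0 : ℝ)..1, (q - p) / (p + t * (q - p) - w)

lemma segmentInvIntegral_eq_log_sub {p q w c : ℂ}
    (h : ∀ t ∈ Icc (0 : ℝ) 1, c * (p + t * (q - p) - w) ∈ slitPlane) :
    segmentInvIntegral p q w = log (c * (q - w)) - log (c * (p - w)) := by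
  have hne : ∀ t ∈ Icc (0 : ℝ) 1, c ≠ 0 ∧ p + t * (q - p) - w ≠ 0 := fun t ht =>
    mul_ne_zero_iff.1 (slitPlane_ne_zero (h t ht))
  have hderiv : ∀ t ∈ uIcc (0 : ℝ) 1,
      HasDerivAt (fun s : ℝ => log (c * (p + s * (q - p) - w)))
        ((q - p) / (p + t * (q - p) - w)) t := by
    intro t ht
    rw [uIcc_of_le zero_le_one] at ht
    have hlin : HasDerivAt (fun s : ℝ => c * (p + s * (q - p) - w)) (c * (q - p)) t := by
      simpa using ((ofRealCLM.hasDerivAt (x := t)).mul_const (q - p)).const_add p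
        |>.sub_const w |>.const_mul c
    convert hlin.clog_real (h t ht) using 1
    rw [mul_div_mul_left _ _ (hne t ht).1]
  have hcont : ContinuousOn (fun t : ℝ => (q - p) / (p + t * (q - p) - w)) (uIcc 0 1) := by
    rw [uIcc_of_le zero_le_one]
    exact continuousOn_const.div (by fun_prop) fun t ht => (hne t ht).2
  rw [segmentInvIntegral, intervalIntegral.integral_eq_sub_of_hasDerivAt hderiv
    hcont.intervalIntegrable]
  simp

lemma lipschitzOnWith_segment_inv {p q w : ℂ} {δ : ℝ} (hδ : 0 < δ)
    (hw : ∀ t ∈ Icc (0 : ℝ) 1, δ ≤ ‖p + t * (q - p) - w‖) :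
    LipschitzOnWith (‖q - p‖ ^ 2 / δ ^ 2).toNNReal
      (fun t : ℝ => (q - p) / (p + t * (q - p) - w)) (Icc 0 1) := by
  refine LipschitzOnWith.of_dist_le_mul fun s hs t ht => ?_
  have hs' := hδ.trans_le (hw s hs)
  have ht' := hδ.trans_le (hw t ht)
  rw [Real.coe_toNNReal _ (by positivity), dist_eq_norm, Real.dist_eq,
    div_sub_div _ _ (norm_pos_iff.1 hs') (norm_pos_iff.1 ht')]
  have hnum : (q - p) * (p + t * (q - p) - w) - (p + s * (q - p) - w) * (q - p)
      = (q - p) ^ 2 * ((t - s : ℝ) : ℂ) := by push_cast; ring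
  rw [hnum, norm_div, norm_mul, norm_mul, norm_pow, norm_real, Real.norm_eq_abs,
    abs_sub_comm, div_le_iff₀ (by positivity)]
  calc ‖q - p‖ ^ 2 * |s - t| = ‖q - p‖ ^ 2 / δ ^ 2 * |s - t| * (δ * δ) := by field_simp
    _ ≤ ‖q - p‖ ^ 2 / δ ^ 2 * |s - t| *
        (‖p + s * (q - p) - w‖ * ‖p + t * (q - p) - w‖) := by
      gcongr
      exacts [hw s hs, hw t ht]

lemma rmem_segmentInvIntegral {X : Set ℂ} (hX : IsCompact X) {p q : ℂ}
    (hpq : ∀ t ∈ Icc (0 : ℝ) 1, p + t * (q - p) ∉ X) : Rmem X (segmentInvIntegral p q) := by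
  obtain ⟨δ, hδ, hdist⟩ := exists_pos_forall_le_dist
    (isCompact_Icc.image (f := fun t : ℝ => p + t * (q - p)) (by fun_prop)) hX.isClosed
    (disjoint_left.2 fun _ ⟨t, ht, h⟩ => h ▸ hpq t ht)
  have hw : ∀ w ∈ X, ∀ t ∈ Icc (0 : ℝ) 1, δ ≤ ‖p + t * (q - p) - w‖ := fun w hw t ht =>
    dist_eq_norm (p + t * (q - p)) w ▸ hdist _ ⟨t, ht, rfl⟩ w hw
  refine rmem_of_approx fun ε hε => ?_
  obtain ⟨n, hn⟩ := exists_nat_gt (‖q - p‖ ^ 2 / δ ^ 2 / ε)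
  have hn0 : 0 < n := Nat.cast_pos.1 ((div_nonneg (by positivity) hε.le).trans_lt hn)
  have hkn : ∀ k ∈ Finset.range n, (k / n : ℝ) ∈ Icc (0 : ℝ) 1 := fun k hk =>
    ⟨by positivity, div_le_one_of_le₀ (Nat.cast_le.2 (Finset.mem_range.1 hk).le) n.cast_nonneg⟩
  refine ⟨fun w => ∑ k ∈ Finset.range n,
      (n : ℂ)⁻¹ * ((q - p) / (p + (k / n : ℝ) * (q - p) - w)),
    ratOn_sum _ fun k hk => (ratOn_const X _).mul (ratOn_div_sub _ (hpq _ (hkn k hk))),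
    fun w hwX => (norm_integral_sub_riemannSum_le (lipschitzOnWith_segment_inv hδ (hw w hwX))
      hn0).trans ?_⟩
  rw [Real.coe_toNNReal _ (by positivity), div_le_iff₀ (Nat.cast_pos.2 hn0)]
  rw [div_lt_iff₀ hε] at hn
  linarith

lemma Complex.log_neg_of_im_neg {u : ℂ} (h : u.im < 0) :
    log (-u) = log u + Real.pi * I := by
  apply Complex.ext <;> simp [log_re, log_im, arg_neg_eq_arg_add_pi_of_im_neg h]

lemma Complex.log_neg_of_im_pos {u : ℂ} (h : 0 < u.im) :
    log (-u) = log u - Real.pi * I := by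
  apply Complex.ext <;> simp [log_re, log_im, arg_neg_eq_arg_sub_pi_of_im_pos h]

def rectInvIntegral (z₀ z₁ w : ℂ) : ℂ :=
  segmentInvIntegral z₀ ⟨z₁.re, z₀.im⟩ w + segmentInvIntegral ⟨z₁.re, z₀.im⟩ z₁ w +
    segmentInvIntegral z₁ ⟨z₀.re, z₁.im⟩ w + segmentInvIntegral ⟨z₀.re, z₁.im⟩ z₀ w

lemma rectInvIntegral_of_mem {z₀ z₁ w : ℂ} (hw : w ∈ Ioo z₀.re z₁.re ×ℂ Ioo z₀.im z₁.im) :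
    rectInvIntegral z₀ z₁ w = 2 * Real.pi * I := by
  obtain ⟨⟨h₁, h₂⟩, h₃, h₄⟩ := hw
  -- only the left edge meets the slit, so it is rotated by `-1`; undoing this at its two ends
  -- costs a jump of `π` in `arg` each
  rw [rectInvIntegral, segmentInvIntegral_eq_log_sub (c := 1),
    segmentInvIntegral_eq_log_sub (c := 1), segmentInvIntegral_eq_log_sub (c := 1),
    segmentInvIntegral_eq_log_sub (c := -1)]
  · simp only [one_mul, neg_one_mul]
    rw [log_neg_of_im_neg (by simpa using h₃), log_neg_of_im_pos (by simpa using h₄)]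
    ring
  all_goals
    intro t ⟨ht₀, ht₁⟩
    simp [mem_slitPlane_iff]
    first
    | exact Or.inl (by nlinarith)
    | exact Or.inr fun h => by nlinarith

lemma add_mul_sub_mem_rectangle {z₀ z₁ p q : ℂ} (hp : p ∈ Rectangle z₀ z₁)
    (hq : q ∈ Rectangle z₀ z₁) {t : ℝ} (ht : t ∈ Icc 0 1) :
    p + t * (q - p) ∈ Rectangle z₀ z₁ :=
  ⟨by simpa using (convex_uIcc _ _).add_smul_sub_mem hp.1 hq.1 ht,
    by simpa using (convex_uIcc _ _).add_smul_sub_mem hp.2 hq.2 ht⟩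

lemma reProdIm_Ioo_subset_rectangle {z₀ z₁ : ℂ} :
    Ioo z₀.re z₁.re ×ℂ Ioo z₀.im z₁.im ⊆ Rectangle z₀ z₁ := fun _ h =>
  ⟨Ioo_subset_Icc_self.trans Icc_subset_uIcc h.1, Ioo_subset_Icc_self.trans Icc_subset_uIcc h.2⟩

lemma rectInvIntegral_eq_zero {z₀ z₁ w c : ℂ}
    (hc : ∀ ζ ∈ Rectangle z₀ z₁, c * (ζ - w) ∈ slitPlane) :
    rectInvIntegral z₀ z₁ w = 0 := by
  have hcorner : ∀ p ∈ Rectangle z₀ z₁, ∀ q ∈ Rectangle z₀ z₁,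
      segmentInvIntegral p q w = log (c * (q - w)) - log (c * (p - w)) :=
    fun p hp q hq => segmentInvIntegral_eq_log_sub fun t ht =>
      by simpa only [add_sub_right_comm] using hc _ (add_mul_sub_mem_rectangle hp hq ht)
  have h₀₀ : z₀ ∈ Rectangle z₀ z₁ := ⟨left_mem_uIcc, left_mem_uIcc⟩
  have h₁₀ : (⟨z₁.re, z₀.im⟩ : ℂ) ∈ Rectangle z₀ z₁ := ⟨right_mem_uIcc, left_mem_uIcc⟩
  have h₁₁ : z₁ ∈ Rectangle z₀ z₁ := ⟨right_mem_uIcc, right_mem_uIcc⟩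
  have h₀₁ : (⟨z₀.re, z₁.im⟩ : ℂ) ∈ Rectangle z₀ z₁ := ⟨left_mem_uIcc, right_mem_uIcc⟩
  rw [rectInvIntegral, hcorner _ h₀₀ _ h₁₀, hcorner _ h₁₀ _ h₁₁, hcorner _ h₁₁ _ h₀₁,
    hcorner _ h₀₁ _ h₀₀]
  ring

lemma rectInvIntegral_of_notMem {z₀ z₁ w : ℂ} (hw : w ∉ Rectangle z₀ z₁) :
    rectInvIntegral z₀ z₁ w = 0 := by
  simp only [Rectangle, mem_reProdIm, uIcc, mem_Icc, not_and_or, not_le] at hw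
  obtain ⟨c, hc⟩ : ∃ c : ℂ, ∀ ζ ∈ Rectangle z₀ z₁, c * (ζ - w) ∈ slitPlane := by
    rcases hw with (hw | hw) | (hw | hw)
    · exact ⟨1, fun ζ ⟨h, _⟩ => by simpa [mem_slitPlane_iff] using Or.inl (hw.trans_le h.1)⟩
    · exact ⟨-1, fun ζ ⟨h, _⟩ => by simpa [mem_slitPlane_iff] using Or.inl (h.2.trans_lt hw)⟩
    · exact ⟨1, fun ζ ⟨_, h⟩ => by
        simpa [mem_slitPlane_iff, sub_eq_zero] using Or.inr (hw.trans_le h.1).ne'⟩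
    · exact ⟨1, fun ζ ⟨_, h⟩ => by
        simpa [mem_slitPlane_iff, sub_eq_zero] using Or.inr (h.2.trans_lt hw).ne⟩
  exact rectInvIntegral_eq_zero hc

lemma rmem_indicator_rect {X : Set ℂ} (hX : IsCompact X) {z₀ z₁ : ℂ}
    (hXR : ∀ w ∈ X, w ∈ Ioo z₀.re z₁.re ×ℂ Ioo z₀.im z₁.im ∨ w ∉ Rectangle z₀ z₁) :
    Rmem X ((Ioo z₀.re z₁.re ×ℂ Ioo z₀.im z₁.im).indicator 1) := by
  have hedge : ∀ {p q : ℂ}, p ∈ Rectangle z₀ z₁ → q ∈ Rectangle z₀ z₁ →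
      (∀ t ∈ Icc (0 : ℝ) 1, p + t * (q - p) ∉ Ioo z₀.re z₁.re ×ℂ Ioo z₀.im z₁.im) →
      Rmem X (segmentInvIntegral p q) := fun hp hq hpq =>
    rmem_segmentInvIntegral hX fun t ht htX =>
      (hXR _ htX).elim (hpq t ht) (· (add_mul_sub_mem_rectangle hp hq ht))
  have hrect : Rmem X (rectInvIntegral z₀ z₁) :=
    (((hedge (p := z₀) (q := ⟨z₁.re, z₀.im⟩) ⟨left_mem_uIcc, left_mem_uIcc⟩
      ⟨right_mem_uIcc, left_mem_uIcc⟩ fun t _ h => by simp [mem_reProdIm] at h).add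
    (hedge (p := ⟨z₁.re, z₀.im⟩) (q := z₁) ⟨right_mem_uIcc, left_mem_uIcc⟩
      ⟨right_mem_uIcc, right_mem_uIcc⟩ fun t _ h => by simp [mem_reProdIm] at h)).add
    (hedge (p := z₁) (q := ⟨z₀.re, z₁.im⟩) ⟨right_mem_uIcc, right_mem_uIcc⟩
      ⟨left_mem_uIcc, right_mem_uIcc⟩ fun t _ h => by simp [mem_reProdIm] at h)).add
    (hedge (p := ⟨z₀.re, z₁.im⟩) (q := z₀) ⟨left_mem_uIcc, right_mem_uIcc⟩
      ⟨left_mem_uIcc, left_mem_uIcc⟩ fun t _ h => by simp [mem_reProdIm] at h)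
  refine ((rmem_const X (2 * Real.pi * I)⁻¹).mul hX hrect).congr fun w hw => ?_
  dsimp only
  rcases hXR w hw with hin | hout
  · rw [rectInvIntegral_of_mem hin, indicator_of_mem hin, Pi.one_apply,
      inv_mul_cancel₀ (by simp [Real.pi_ne_zero])]
  · have hw' : w ∉ Ioo z₀.re z₁.re ×ℂ Ioo z₀.im z₁.im :=
      fun h => hout (reProdIm_Ioo_subset_rectangle h)
    simp [rectInvIntegral_of_notMem hout, hw']

lemma exists_dist_le_of_mem_rectangle {a b δ : ℝ} (hab : a ≤ b) (hδ : 0 ≤ δ) {w : ℂ}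
    (hw : w ∈ Rectangle ⟨a - δ, -δ⟩ ⟨b + δ, δ⟩) : ∃ c ∈ Icc a b, dist (c : ℂ) w ≤ 2 * δ := by
  obtain ⟨hre, him⟩ := hw
  rw [mem_preimage, uIcc_of_le (by linarith)] at hre
  rw [mem_preimage, uIcc_of_le (by linarith)] at him
  obtain ⟨c, hc, hcw⟩ : ∃ c ∈ Icc a b, |c - w.re| ≤ δ := by
    rcases le_total w.re a with h | h
    · exact ⟨a, left_mem_Icc.2 hab, abs_le.2 ⟨by linarith, by linarith [hre.1]⟩⟩
    rcases le_total w.re b with h' | h'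
    · exact ⟨w.re, ⟨h, h'⟩, by simpa using hδ⟩
    · exact ⟨b, right_mem_Icc.2 hab, abs_le.2 ⟨by linarith [hre.2], by linarith⟩⟩
  refine ⟨c, hc, ?_⟩
  calc dist (c : ℂ) w ≤ |c - w.re| + |w.im| := by
        simpa [dist_eq] using norm_le_abs_re_add_abs_im ((c : ℂ) - w)
    _ ≤ 2 * δ := by linarith [abs_le.2 him]

lemma rmem_indicator_segment {X : Set ℂ} (hX : IsCompact X) {a b : ℝ}
    (hXJ : IsClosed (X \ ofReal '' Icc a b)) :
    Rmem X ((ofReal '' Icc a b).indicator 1) := by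
  set J := ofReal '' Icc a b
  rcases lt_or_ge b a with hba | hab
  · have hJ : J = ∅ := by simp [J, Icc_eq_empty_of_lt hba]
    exact (rmem_const X 0).congr fun w _ => by simp [hJ]
  obtain ⟨r, hr, hJr⟩ := exists_pos_forall_le_dist
    (isCompact_Icc.image continuous_ofReal) hXJ disjoint_sdiff_right
  set δ := r / 3
  have hδ : 0 < δ := by positivity
  set z₀ : ℂ := ⟨a - δ, -δ⟩
  set z₁ : ℂ := ⟨b + δ, δ⟩
  have hJ : J ⊆ Ioo z₀.re z₁.re ×ℂ Ioo z₀.im z₁.im := by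
    rintro _ ⟨t, ht, rfl⟩
    simp only [mem_reProdIm, ofReal_re, ofReal_im, mem_Ioo, z₀, z₁]
    exact ⟨⟨by linarith [ht.1], by linarith [ht.2]⟩, by linarith, by linarith⟩
  have hnear : ∀ w ∈ Rectangle z₀ z₁, ∃ z ∈ J, dist z w < r := fun w hw =>
    let ⟨c, hc, hcw⟩ := exists_dist_le_of_mem_rectangle hab hδ.le hw
    ⟨c, ⟨c, hc, rfl⟩, hcw.trans_lt (by linarith [show δ = r / 3 from rfl])⟩
  have hout : ∀ w ∈ X \ J, w ∉ Rectangle z₀ z₁ := fun w hw hwR =>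
    let ⟨z, hz, hzw⟩ := hnear w hwR
    (hJr z hz w hw).not_gt hzw
  refine (rmem_indicator_rect hX (z₀ := z₀) (z₁ := z₁) fun w hw => ?_).congr fun w hw => ?_
  · by_cases hwJ : w ∈ J
    exacts [Or.inl (hJ hwJ), Or.inr (hout w ⟨hw, hwJ⟩)]
  · by_cases hwJ : w ∈ J
    · simp [hwJ, hJ hwJ]
    · have hw' : w ∉ Ioo z₀.re z₁.re ×ℂ Ioo z₀.im z₁.im :=
        fun h => hout w ⟨hw, hwJ⟩ (reProdIm_Ioo_subset_rectangle h)
      simp [hwJ, hw']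

theorem stmt17_general (X J : Set ℂ) (hX : IsCompact X)
    (a b : ℝ) (hJ : J = (fun t : ℝ => (t : ℂ)) '' Set.Icc a b)
    (hnotreg : ¬ RegularR X)
    (hpoc : ∀ x ∈ X \ J, PointOfCont X x) :
    (∀ K : Set ℂ, K.Nonempty → IsCompact K → K ⊆ X \ J → RegularR K) ∧
      ¬ RelClopen X J ∧ X ≠ J := by
  subst hJ
  have hJ : IsCompact (ofReal '' Icc a b) := isCompact_Icc.image continuous_ofReal
  have hregJ : RegularR (ofReal '' Icc a b) :=
    regularR_of_forall_pointOfCont hJ fun x hx => pointOfCont_of_rmem_indicator hJ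
      ((rmem_const _ 1).congr fun z hz => by simp [hz]) hx
  refine ⟨fun K _ hK hKXJ => regularR_of_forall_pointOfCont hK fun x hx =>
      (hpoc x (hKXJ hx)).mono (hKXJ.trans sdiff_subset), ?_, fun h => hnotreg (h ▸ hregJ)⟩
  rintro ⟨⟨U, hU, hJU⟩, -⟩
  have hχ := rmem_indicator_segment hX (a := a) (b := b)
    (by rw [hJU, sdiff_self_inter]; exact hX.isClosed.sdiff hU)
  refine hnotreg (regularR_of_forall_pointOfCont hX fun x hx => ?_)
  by_cases hxJ : x ∈ ofReal '' Icc a b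
  exacts [pointOfCont_of_rmem_indicator hX hχ hxJ, hpoc x ⟨hx, hxJ⟩]

/-- Given a compact plane set `X` and a nondegenerate closed real interval `J ⊆ X` with
`R(X)` not regular but every point of `X \ J` a point of continuity for `R(X)`:
(a) `R(K)` is regular for every nonempty compact `K ⊆ X \ J`; (b) `J` is not clopen
in `X`; (c) `X ≠ J`. -/
theorem stmt17 (X J : Set ℂ) (hX : IsCompact X) (hXne : X.Nonempty)
    (a b : ℝ) (hab : a < b) (hJ : J = (fun t : ℝ => (t : ℂ)) '' Set.Icc a b)
    (hJX : J ⊆ X)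
    (hnotreg : ¬ RegularR X)
    (hpoc : ∀ x ∈ X \ J, PointOfCont X x) :
    (∀ K : Set ℂ, K.Nonempty → IsCompact K → K ⊆ X \ J → RegularR K) ∧
      ¬ RelClopen X J ∧ X ≠ J :=
  stmt17_general X J hX a b hJ hnotreg hpoc
end
end

section
/- Let X ⊆ ℂ be compact with X ⊆ {z : dist(z, J) ≤ 1} for a nondegenerate closed interval J ⊆ ℝ, J ⊆ X. Define X_1 = J ∪ ⋃_{n∈ℕ} {z ∈ X : 1/(2n+1) ≤ dist(z,J) ≤ 1/(2n) and sin(n·Re z) ≤ 0}. Then X_1 \ J is a union of a sequence of pairwise disjoint, nonempty, relatively clopen subsets of X_1 whose diameters tend to 0, where the pieces are the 'band' sets {z ∈ X : 1/(2n+1) ≤ dist(z,J) ≤ 1/(2n), sin(n·Re z) ≤ 0} split by the vertical strips {z : sin(n·Re z) ≤ 0} into sets of diameter at most (2π/n) + 1/(2n(2n+1)) + 2/(2n+1). -/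
open Set Metric Filter Topology

noncomputable section

lemma sin_pos_of_between (k : ℤ) (t : ℝ) (h1 : (k : ℝ) * (2 * Real.pi) < t)
    (h2 : t < (k : ℝ) * (2 * Real.pi) + Real.pi) : 0 < Real.sin t := by
  have h := Real.sin_sub_int_mul_two_pi t k
  rw [← h]
  exact Real.sin_pos_of_pos_of_lt_pi (by linarith) (by linarith)

lemma sin_decomp {t : ℝ} (ht : Real.sin t ≤ 0) :
    ∃ k : ℤ, (2 * (k : ℝ) - 1) * Real.pi ≤ t ∧ t ≤ 2 * (k : ℝ) * Real.pi := by
  have hπ := Real.pi_pos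
  set k : ℤ := ⌈t / (2 * Real.pi)⌉ with hk
  have h1 : t ≤ 2 * (k : ℝ) * Real.pi := by
    have h := Int.le_ceil (t / (2 * Real.pi))
    rw [← hk] at h
    have := (div_le_iff₀ (by positivity : (0:ℝ) < 2 * Real.pi)).mp h
    linarith
  have h2 : ((k : ℝ) - 1) * (2 * Real.pi) < t := by
    have h := Int.ceil_lt_add_one (t / (2 * Real.pi))
    rw [← hk] at h
    have h' : (k : ℝ) - 1 < t / (2 * Real.pi) := by linarith
    have := (lt_div_iff₀ (by positivity : (0:ℝ) < 2 * Real.pi)).mp h'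
    linarith
  refine ⟨k, ?_, h1⟩
  by_contra hcon
  push_neg at hcon
  have hpos : 0 < Real.sin t := by
    apply sin_pos_of_between (k - 1) t
    · push_cast; linarith
    · push_cast; nlinarith
  linarith

set_option maxHeartbeats 1000000 in
/-- With `Band n = {z ∈ X | 1/(2(n+1)+1) ≤ dist(z,J) ≤ 1/(2(n+1)), sin((n+1)·Re z) ≤ 0}`
and `X₁ = J ∪ ⋃ Band n`: the set `X₁ \ J` is a union of countably many pairwise
disjoint nonempty relatively clopen subsets of `X₁` whose diameters tend to `0`, each
piece lying in a single band, with the stated diameter bound. -/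
theorem stmt19 (X J : Set ℂ) (hX : IsCompact X) (hXne : X.Nonempty)
    (a b : ℝ) (hab : a < b) (hJ : J = (fun t : ℝ => (t : ℂ)) '' Set.Icc a b)
    (hJX : J ⊆ X)
    (hXnear : ∀ z ∈ X, Metric.infDist z J ≤ 1)
    (Band : ℕ → Set ℂ)
    (hBand : ∀ n : ℕ, Band n =
      {z ∈ X | 1 / (2 * ((n : ℝ) + 1) + 1) ≤ Metric.infDist z J ∧
        Metric.infDist z J ≤ 1 / (2 * ((n : ℝ) + 1)) ∧
        Real.sin (((n : ℝ) + 1) * z.re) ≤ 0})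
    (X₁ : Set ℂ) (hX₁ : X₁ = J ∪ ⋃ n, Band n) :
    ∃ (ι : Type) (P : ι → Set ℂ), Countable ι ∧
      (∀ i, (P i).Nonempty) ∧
      Pairwise (Function.onFun Disjoint P) ∧
      (∀ i, RelClopen X₁ (P i)) ∧
      (⋃ i, P i) = X₁ \ J ∧
      Tendsto (fun i => Metric.diam (P i)) cofinite (nhds 0) ∧
      ∀ i, ∃ n : ℕ, P i ⊆ Band n ∧
        Metric.diam (P i) ≤
          2 * Real.pi / ((n : ℝ) + 1) +
            1 / (2 * ((n : ℝ) + 1) * (2 * ((n : ℝ) + 1) + 1)) +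
            2 / (2 * ((n : ℝ) + 1) + 1) := by
  have hπ := Real.pi_pos
  have hπ3 := Real.pi_gt_three
  have hJne : J.Nonempty := ⟨(a : ℂ), by rw [hJ]; exact ⟨a, ⟨le_refl a, le_of_lt hab⟩, rfl⟩⟩
  have hBandX : ∀ n, Band n ⊆ X := by
    intro n z hz; rw [hBand n] at hz; exact hz.1
  have hBd : ∀ (n : ℕ) (z : ℂ), z ∈ Band n →
      1 / (2 * ((n:ℝ) + 1) + 1) ≤ infDist z J ∧ infDist z J ≤ 1 / (2 * ((n:ℝ) + 1)) ∧
      Real.sin (((n:ℝ) + 1) * z.re) ≤ 0 := by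
    intro n z hz; rw [hBand n] at hz; exact hz.2
  have hBandJ : ∀ (n : ℕ) (z : ℂ), z ∈ Band n → z ∉ J := by
    intro n z hz hzJ
    have h1 := (hBd n z hz).1
    have h2 : infDist z J = 0 := infDist_zero_of_mem hzJ
    have : (0:ℝ) < 1 / (2 * ((n:ℝ) + 1) + 1) := by positivity
    linarith
  have him : ∀ z : ℂ, |z.im| ≤ infDist z J := by
    intro z
    by_contra h
    push_neg at h
    obtain ⟨y, hy, hd⟩ := (infDist_lt_iff hJne).mp h
    rw [hJ] at hy
    obtain ⟨t, _, rfl⟩ := hy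
    have hle : |z.im| ≤ dist z (t : ℂ) := by
      rw [Complex.dist_eq]
      have he : (z - (t:ℂ)).im = z.im := by simp
      rw [← he]
      exact Complex.abs_im_le_norm _
    linarith
  set Q : ℕ × ℤ → Set ℂ := fun p =>
    Band p.1 ∩ {z : ℂ | (2 * (p.2 : ℝ) - 1) * Real.pi / ((p.1 : ℝ) + 1) ≤ z.re ∧
      z.re ≤ 2 * (p.2 : ℝ) * Real.pi / ((p.1 : ℝ) + 1)} with hQdef
  have hband_eq : ∀ (n n' : ℕ) (z : ℂ), z ∈ Band n' →
      1 / (2 * ((n:ℝ) + 1) + 2) < infDist z J →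
      infDist z J < 1 / (2 * ((n:ℝ) + 1) - 1) → n' = n := by
    intro n n' z hz hlo hhi
    obtain ⟨h1, h2, _⟩ := hBd n' z hz
    rcases Nat.lt_trichotomy n' n with h | h | h
    · exfalso
      have hc : (n' : ℝ) + 1 ≤ (n : ℝ) := by exact_mod_cast h
      have hp : (0:ℝ) < 2 * ((n':ℝ) + 1) + 1 := by positivity
      have hle : 2 * ((n':ℝ) + 1) + 1 ≤ 2 * ((n:ℝ) + 1) - 1 := by linarith
      have := one_div_le_one_div_of_le hp hle
      linarith
    · exact h
    · exfalso
      have hc : (n : ℝ) + 1 ≤ (n' : ℝ) := by exact_mod_cast h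
      have hp : (0:ℝ) < 2 * ((n:ℝ) + 1) + 2 := by positivity
      have hle : 2 * ((n:ℝ) + 1) + 2 ≤ 2 * ((n':ℝ) + 1) := by linarith
      have := one_div_le_one_div_of_le hp hle
      linarith
  -- diameter bound
  have hdiam : ∀ (n : ℕ) (k : ℤ),
      diam (Q (n, k)) ≤ Real.pi / ((n:ℝ) + 1) + 1 / ((n:ℝ) + 1) := by
    intro n k
    have hm : (0:ℝ) < (n:ℝ) + 1 := by positivity
    have h2m : (0:ℝ) < 2 * ((n:ℝ) + 1) := by positivity
    apply diam_le_of_forall_dist_le (by positivity)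
    rintro z ⟨hz, hz1, hz2⟩ w ⟨hw, hw1, hw2⟩
    have hdz := (hBd n z hz).2.1
    have hdw := (hBd n w hw).2.1
    have hiz : |z.im| ≤ 1 / (2 * ((n:ℝ) + 1)) := le_trans (him z) hdz
    have hiw : |w.im| ≤ 1 / (2 * ((n:ℝ) + 1)) := le_trans (him w) hdw
    rw [Complex.dist_eq]
    have hre : |(z - w).re| ≤ Real.pi / ((n:ℝ) + 1) := by
      rw [Complex.sub_re, abs_sub_le_iff]
      have hint : 2 * (k:ℝ) * Real.pi / ((n:ℝ)+1) - (2 * (k:ℝ) - 1) * Real.pi / ((n:ℝ)+1)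
          = Real.pi / ((n:ℝ)+1) := by ring
      constructor <;> simp only at hz1 hz2 hw1 hw2 <;> linarith
    have him2 : |(z - w).im| ≤ 1 / ((n:ℝ) + 1) := by
      rw [Complex.sub_im]
      have h1 : |z.im - w.im| ≤ |z.im| + |w.im| := abs_sub _ _
      have heq : 1 / (2 * ((n:ℝ)+1)) + 1 / (2 * ((n:ℝ)+1)) = 1 / ((n:ℝ)+1) := by
        rw [← add_div, div_eq_div_iff h2m.ne' hm.ne']; ring
      linarith
    calc ‖z - w‖ ≤ |(z - w).re| + |(z - w).im| :=
          Complex.norm_le_abs_re_add_abs_im _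
      _ ≤ Real.pi / ((n:ℝ) + 1) + 1 / ((n:ℝ) + 1) := by linarith
  -- relative clopenness
  have hclopen : ∀ (n : ℕ) (k : ℤ), RelClopen X₁ (Q (n, k)) := by
    intro n k
    have hm : (0:ℝ) < (n:ℝ) + 1 := by positivity
    have hm1 : (1:ℝ) ≤ (n:ℝ) + 1 := by
      have : (0:ℝ) ≤ (n:ℝ) := Nat.cast_nonneg n
      linarith
    constructor
    · -- open
      refine ⟨(fun z => infDist z J) ⁻¹' Ioo (1/(2*((n:ℝ)+1)+2)) (1/(2*((n:ℝ)+1)-1)) ∩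
        Complex.re ⁻¹' Ioo ((2*(k:ℝ)-1)*Real.pi/((n:ℝ)+1) - Real.pi/(2*((n:ℝ)+1)))
          (2*(k:ℝ)*Real.pi/((n:ℝ)+1) + Real.pi/(2*((n:ℝ)+1))), ?_, ?_⟩
      · exact (isOpen_Ioo.preimage (continuous_infDist_pt J)).inter
          (isOpen_Ioo.preimage Complex.continuous_re)
      · apply Set.Subset.antisymm
        · rintro z ⟨hzB, hr1, hr2⟩
          obtain ⟨hd1, hd2, hsin⟩ := hBd n z hzB
          have ha : 1/(2*((n:ℝ)+1)+2) < 1/(2*((n:ℝ)+1)+1) :=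
            one_div_lt_one_div_of_lt (by positivity) (by linarith)
          have hb : 1/(2*((n:ℝ)+1)) < 1/(2*((n:ℝ)+1)-1) :=
            one_div_lt_one_div_of_lt (by linarith) (by linarith)
          have hq : (0:ℝ) < Real.pi/(2*((n:ℝ)+1)) := by positivity
          refine ⟨?_, ⟨?_, ?_⟩, ?_, ?_⟩
          · rw [hX₁]; exact Or.inr (mem_iUnion.mpr ⟨n, hzB⟩)
          · simp only; linarith
          · simp only; linarith
          · simp only at hr1 ⊢; linarith
          · simp only at hr2 ⊢; linarith
        · rintro z ⟨hzX, hU⟩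
          simp only [mem_inter_iff, mem_preimage, mem_Ioo] at hU
          obtain ⟨⟨hd1, hd2⟩, hr1, hr2⟩ := hU
          rw [hX₁] at hzX
          rcases hzX with hzJ | hzB
          · exfalso
            have h0 : infDist z J = 0 := infDist_zero_of_mem hzJ
            have : (0:ℝ) < 1/(2*((n:ℝ)+1)+2) := by positivity
            linarith
          · obtain ⟨n', hzB⟩ := mem_iUnion.mp hzB
            have hnn := hband_eq n n' z hzB hd1 hd2
            rw [hnn] at hzB
            obtain ⟨_, _, hsin⟩ := hBd n z hzB
            have e1 : (2*(k:ℝ)-1)*Real.pi/((n:ℝ)+1) * ((n:ℝ)+1) = (2*(k:ℝ)-1)*Real.pi :=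
              div_mul_cancel₀ _ hm.ne'
            have e2 : Real.pi/(2*((n:ℝ)+1)) * ((n:ℝ)+1) = Real.pi/2 := by
              field_simp
            have e3 : 2*(k:ℝ)*Real.pi/((n:ℝ)+1) * ((n:ℝ)+1) = 2*(k:ℝ)*Real.pi :=
              div_mul_cancel₀ _ hm.ne'
            refine ⟨hzB, ?_, ?_⟩
            · by_contra hcon
              push_neg at hcon
              have hA : z.re * ((n:ℝ)+1) < (2*(k:ℝ)-1)*Real.pi :=
                (lt_div_iff₀ hm).mp hcon
              have hB : ((2*(k:ℝ)-1)*Real.pi/((n:ℝ)+1) - Real.pi/(2*((n:ℝ)+1))) * ((n:ℝ)+1)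
                  < z.re * ((n:ℝ)+1) := by
                exact mul_lt_mul_of_pos_right hr1 hm
              rw [sub_mul, e1, e2] at hB
              have := sin_pos_of_between (k-1) (((n:ℝ)+1) * z.re)
                (by push_cast; linarith) (by push_cast; linarith)
              linarith
            · by_contra hcon
              push_neg at hcon
              have hA : 2*(k:ℝ)*Real.pi < z.re * ((n:ℝ)+1) :=
                (div_lt_iff₀ hm).mp hcon
              have hB : z.re * ((n:ℝ)+1)
                  < (2*(k:ℝ)*Real.pi/((n:ℝ)+1) + Real.pi/(2*((n:ℝ)+1))) * ((n:ℝ)+1) :=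
                mul_lt_mul_of_pos_right hr2 hm
              rw [add_mul, e3, e2] at hB
              have := sin_pos_of_between k (((n:ℝ)+1) * z.re)
                (by push_cast; linarith) (by push_cast; linarith)
              linarith
    · -- closed
      refine ⟨(fun z => infDist z J) ⁻¹' Icc (1/(2*((n:ℝ)+1)+1)) (1/(2*((n:ℝ)+1))) ∩
        Complex.re ⁻¹' Icc ((2*(k:ℝ)-1)*Real.pi/((n:ℝ)+1)) (2*(k:ℝ)*Real.pi/((n:ℝ)+1)), ?_, ?_⟩
      · exact (isClosed_Icc.preimage (continuous_infDist_pt J)).inter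
          (isClosed_Icc.preimage Complex.continuous_re)
      · apply Set.Subset.antisymm
        · rintro z ⟨hzB, hr1, hr2⟩
          obtain ⟨hd1, hd2, hsin⟩ := hBd n z hzB
          exact ⟨by rw [hX₁]; exact Or.inr (mem_iUnion.mpr ⟨n, hzB⟩),
            ⟨⟨hd1, hd2⟩, ⟨hr1, hr2⟩⟩⟩
        · rintro z ⟨hzX, hC⟩
          simp only [mem_inter_iff, mem_preimage, mem_Icc] at hC
          obtain ⟨⟨hd1, hd2⟩, hr1, hr2⟩ := hC
          rw [hX₁] at hzX
          rcases hzX with hzJ | hzB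
          · exfalso
            have h0 : infDist z J = 0 := infDist_zero_of_mem hzJ
            have : (0:ℝ) < 1/(2*((n:ℝ)+1)+1) := by positivity
            linarith
          · obtain ⟨n', hzB⟩ := mem_iUnion.mp hzB
            have ha : 1/(2*((n:ℝ)+1)+2) < 1/(2*((n:ℝ)+1)+1) :=
              one_div_lt_one_div_of_lt (by positivity) (by linarith)
            have hb : 1/(2*((n:ℝ)+1)) < 1/(2*((n:ℝ)+1)-1) :=
              one_div_lt_one_div_of_lt (by linarith) (by linarith)
            have hnn := hband_eq n n' z hzB (by linarith) (by linarith)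
            rw [hnn] at hzB
            exact ⟨hzB, hr1, hr2⟩
  refine ⟨{p : ℕ × ℤ // (Q p).Nonempty}, fun i => Q i.1, inferInstance,
    fun i => i.2, ?_, fun i => hclopen i.1.1 i.1.2, ?_, ?_, ?_⟩
  · -- pairwise disjoint
    rintro ⟨⟨n, k⟩, hi⟩ ⟨⟨n', k'⟩, hj⟩ hij
    simp only [Function.onFun]
    rw [Set.disjoint_left]
    rintro z ⟨hzB, hz1, hz2⟩ ⟨hzB', hz1', hz2'⟩
    have hm : (0:ℝ) < (n:ℝ) + 1 := by positivity
    have hm1 : (1:ℝ) ≤ (n:ℝ) + 1 := by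
      have : (0:ℝ) ≤ (n:ℝ) := Nat.cast_nonneg n
      linarith
    obtain ⟨hd1, hd2, _⟩ := hBd n z hzB
    have ha : 1/(2*((n:ℝ)+1)+2) < 1/(2*((n:ℝ)+1)+1) :=
      one_div_lt_one_div_of_lt (by positivity) (by linarith)
    have hb : 1/(2*((n:ℝ)+1)) < 1/(2*((n:ℝ)+1)-1) :=
      one_div_lt_one_div_of_lt (by linarith) (by linarith)
    have hnn : n' = n := hband_eq n n' z hzB' (by linarith) (by linarith)
    rw [hnn] at hz1' hz2'
    have hkk : k ≠ k' := by
      intro h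
      exact hij (Subtype.ext (Prod.ext_iff.mpr ⟨hnn.symm, h⟩))
    simp only at hz1 hz2 hz1' hz2'
    have f1 : z.re * ((n:ℝ)+1) ≤ 2*(k:ℝ)*Real.pi := (le_div_iff₀ hm).mp hz2
    have f2 : (2*(k':ℝ)-1)*Real.pi ≤ z.re * ((n:ℝ)+1) := (div_le_iff₀ hm).mp hz1'
    have f3 : z.re * ((n:ℝ)+1) ≤ 2*(k':ℝ)*Real.pi := (le_div_iff₀ hm).mp hz2'
    have f4 : (2*(k:ℝ)-1)*Real.pi ≤ z.re * ((n:ℝ)+1) := (div_le_iff₀ hm).mp hz1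
    rcases lt_trichotomy k k' with h | h | h
    · have hkr : (k:ℝ) + 1 ≤ (k':ℝ) := by exact_mod_cast h
      nlinarith
    · exact hkk h
    · have hkr : (k':ℝ) + 1 ≤ (k:ℝ) := by exact_mod_cast h
      nlinarith
  · -- union
    apply Set.Subset.antisymm
    · rintro z hz
      obtain ⟨⟨⟨n, k⟩, hne⟩, hzQ⟩ := mem_iUnion.mp hz
      exact ⟨by rw [hX₁]; exact Or.inr (mem_iUnion.mpr ⟨n, hzQ.1⟩), hBandJ n z hzQ.1⟩
    · rintro z ⟨hzX, hzJ⟩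
      rw [hX₁] at hzX
      rcases hzX with h | h
      · exact absurd h hzJ
      · obtain ⟨n, hzB⟩ := mem_iUnion.mp h
        have hm : (0:ℝ) < (n:ℝ) + 1 := by positivity
        obtain ⟨_, _, hsin⟩ := hBd n z hzB
        obtain ⟨k, hk1, hk2⟩ := sin_decomp hsin
        have hzQ : z ∈ Q (n, k) := by
          refine ⟨hzB, ?_, ?_⟩
          · simp only
            rw [div_le_iff₀ hm]
            linarith
          · simp only
            rw [le_div_iff₀ hm]
            linarith
        exact mem_iUnion.mpr ⟨⟨(n, k), ⟨z, hzQ⟩⟩, hzQ⟩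
  · -- tendsto
    obtain ⟨R, hR⟩ := hX.isBounded.subset_closedBall 0
    have hR' : ∀ z ∈ X, ‖z‖ ≤ R := by
      intro z hz
      have := hR hz
      rw [mem_closedBall, Complex.dist_eq, sub_zero] at this
      exact this
    have hR0 : 0 ≤ R := by
      obtain ⟨z, hz⟩ := hXne
      exact le_trans (norm_nonneg _) (hR' z hz)
    rw [Metric.tendsto_nhds]
    intro ε hε
    rw [Filter.eventually_cofinite]
    obtain ⟨N, hN⟩ := exists_nat_gt ((Real.pi + 1) / ε)
    obtain ⟨K, hK⟩ := exists_nat_gt (((N:ℝ) * R + Real.pi) / (2 * Real.pi))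
    apply Set.Finite.subset (Set.Finite.preimage (Set.injOn_of_injective Subtype.val_injective)
      ((Set.finite_Iio N).prod (Set.finite_Icc (-(K:ℤ)) (K:ℤ))))
    rintro ⟨⟨n, k⟩, hne⟩ hi
    simp only [Real.dist_eq, sub_zero, not_lt] at hi
    have hdnn : (0:ℝ) ≤ diam (Q (n, k)) := diam_nonneg
    have hi' : ε ≤ diam (Q (n, k)) := le_of_le_of_eq hi (abs_of_nonneg hdnn)
    have hm : (0:ℝ) < (n:ℝ) + 1 := by positivity
    have hnN : n < N := by
      by_contra hcon
      push_neg at hcon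
      have h2 : (N:ℝ) ≤ (n:ℝ) := by exact_mod_cast hcon
      have h3 : (Real.pi + 1) / ε < (n:ℝ) + 1 := by linarith
      have h4 : Real.pi + 1 < ((n:ℝ) + 1) * ε := by
        rw [div_lt_iff₀ hε] at h3
        linarith
      have h5 : Real.pi / ((n:ℝ)+1) + 1 / ((n:ℝ)+1) < ε := by
        rw [← add_div, div_lt_iff₀ hm]
        linarith
      have := hdiam n k
      linarith
    simp only [Set.mem_preimage, Set.mem_prod, Set.mem_Iio, Set.mem_Icc]
    refine ⟨hnN, ?_, ?_⟩
    · -- -K ≤ k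
      obtain ⟨z, hzB, hz1, hz2⟩ := hne
      have hzX := hBandX n hzB
      have hreR : |z.re| ≤ R := le_trans (Complex.abs_re_le_norm z) (hR' z hzX)
      have hmN : (n:ℝ) + 1 ≤ (N:ℝ) := by exact_mod_cast hnN
      have f3 : z.re * ((n:ℝ)+1) ≤ 2*(k:ℝ)*Real.pi := (le_div_iff₀ hm).mp hz2
      have hlow : -((N:ℝ) * R) ≤ z.re * ((n:ℝ)+1) := by
        have h1 : -R ≤ z.re := by
          have := abs_le.mp hreR
          linarith [this.1]
        nlinarith
      have hKc : ((N:ℝ) * R + Real.pi) < (K:ℝ) * (2 * Real.pi) := by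
        rw [div_lt_iff₀ (by positivity : (0:ℝ) < 2 * Real.pi)] at hK
        linarith
      have : -(K:ℝ) < (k:ℝ) := by nlinarith
      have : -(K:ℤ) < k := by exact_mod_cast this
      linarith
    · -- k ≤ K
      obtain ⟨z, hzB, hz1, hz2⟩ := hne
      have hzX := hBandX n hzB
      have hreR : |z.re| ≤ R := le_trans (Complex.abs_re_le_norm z) (hR' z hzX)
      have hmN : (n:ℝ) + 1 ≤ (N:ℝ) := by exact_mod_cast hnN
      have f4 : (2*(k:ℝ)-1)*Real.pi ≤ z.re * ((n:ℝ)+1) := (div_le_iff₀ hm).mp hz1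
      have hhigh : z.re * ((n:ℝ)+1) ≤ (N:ℝ) * R := by
        have h1 : z.re ≤ R := by
          have := abs_le.mp hreR
          linarith [this.2]
        nlinarith
      have hKc : ((N:ℝ) * R + Real.pi) < (K:ℝ) * (2 * Real.pi) := by
        rw [div_lt_iff₀ (by positivity : (0:ℝ) < 2 * Real.pi)] at hK
        linarith
      have : (k:ℝ) < (K:ℝ) := by nlinarith
      have : k < (K:ℤ) := by exact_mod_cast this
      linarith
  · -- diameter bound per band
    rintro ⟨⟨n, k⟩, hne⟩
    refine ⟨n, Set.inter_subset_left, ?_⟩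
    have hm : (0:ℝ) < (n:ℝ) + 1 := by positivity
    have h1 : Real.pi / ((n:ℝ)+1) + 1 / ((n:ℝ)+1) ≤ 2 * Real.pi / ((n:ℝ)+1) := by
      rw [← add_div, div_le_div_iff₀ hm hm]
      nlinarith
    have h2 : (0:ℝ) ≤ 1 / (2 * ((n:ℝ) + 1) * (2 * ((n:ℝ) + 1) + 1)) := by positivity
    have h3 : (0:ℝ) ≤ 2 / (2 * ((n:ℝ) + 1) + 1) := by positivity
    have := hdiam n k
    linarith
end
end
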